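/- arXiv:2301.06750 — 7 statements merged into one kernel-verified Lean document; each statement's English description precedes it below -/
import Mathlib

section
/- Let n ≥ 1 and let A ⊆ (ℤ/5ℤ)^n be sum-free with |A| > (3/2)·5^(n-1). If A is contained in a union of two cosets of a proper subgroup H < (ℤ/5ℤ)^n, then there exists e ∉ H such that A ⊆ (e + H) ∪ (-e + H). -/
open Pointwise

def SumFree {G : Type*} [Add G] (S : Set G) : Prop :=
  ∀ a ∈ S, ∀ b ∈ S, a + b ∉ S

/-!
Write `Q = G ⧸ H`. As `A` lies in two cosets of `H`, `|A| ≤ 2|H|`, so `|A| > 3/2 ⋅ 5^(n-1)`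
forces `|H| = 5^(n-1)`, i.e. `Q ≃ ZMod 5`, and each of the two cosets meets `A` in more than
`|H|/2` points. Two subsets of cosets `x + H`, `y + H` of total size more than `|H|` have sumset
all of `x + y + H`, so the image of `A` in `Q` is sum-free. It consists of two distinct classes,
and the only sum-free pairs of `ZMod 5` are `{e, -e}` with `e ≠ 0`.
-/

theorem Set.ncard_le_ncard_inter_add_ncard_inter {α : Type*} {A s t : Set α} (h : A ⊆ s ∪ t) :
    A.ncard ≤ (A ∩ s).ncard + (A ∩ t).ncard := by
  conv_lhs => rw [← Set.inter_eq_left.2 h, Set.inter_union_distrib_left]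
  exact Set.ncard_union_le _ _

namespace SumFree

variable {G : Type*}

theorem mono [Add G] {S T : Set G} (hT : SumFree T) (hST : S ⊆ T) : SumFree S :=
  fun a ha b hb hab => hT a (hST ha) b (hST hb) (hST hab)

theorem zero_notMem [AddZeroClass G] {S : Set G} (hS : SumFree S) : (0 : G) ∉ S :=
  fun h => hS 0 h 0 h (by rwa [add_zero])

theorem image_addEquiv [Add G] {G' : Type*} [Add G'] (e : G ≃+ G') {S : Set G} (hS : SumFree S) :
    SumFree (e '' S) := by
  rintro _ ⟨a, ha, rfl⟩ _ ⟨b, hb, rfl⟩ ⟨c, hc, hcab⟩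
  rw [← map_add, e.injective.eq_iff] at hcab
  exact hS a ha b hb (hcab ▸ hc)

end SumFree

theorem ZMod.add_eq_zero_of_sumFree_pair {a b : ZMod 5} (h : SumFree ({a, b} : Set (ZMod 5)))
    (hab : a ≠ b) : a + b = 0 := by
  simp only [SumFree, Set.mem_insert_iff, Set.mem_singleton_iff, forall_eq_or_imp,
    forall_eq] at h
  revert a b
  decide

theorem add_eq_zero_of_sumFree_pair {Q : Type*} [AddCommGroup Q] (hQ : Nat.card Q = 5) {a b : Q}
    (h : SumFree ({a, b} : Set Q)) (hab : a ≠ b) : a + b = 0 := by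
  have : Fact (Nat.Prime 5) := ⟨Nat.prime_five⟩
  let e : Q ≃+ ZMod 5 := addEquivOfPrimeCardEq hQ (Nat.card_zmod 5)
  have he : SumFree ({e a, e b} : Set (ZMod 5)) := Set.image_pair e a b ▸ h.image_addEquiv e
  rw [← e.map_eq_zero_iff, map_add]
  exact ZMod.add_eq_zero_of_sumFree_pair he (e.injective.ne hab)

namespace AddSubgroup

variable {G : Type*} [AddCommGroup G] {H : AddSubgroup G}

theorem mem_vadd_coset_iff {g x : G} : x ∈ g +ᵥ (H : Set G) ↔ (g : G ⧸ H) = x := by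
  rw [Set.mem_vadd_set_iff_neg_vadd_mem, QuotientAddGroup.eq, vadd_eq_add, SetLike.mem_coe]

theorem vadd_coset_eq_iff {x y : G} :
    x +ᵥ (H : Set G) = y +ᵥ (H : Set G) ↔ (x : G ⧸ H) = y :=
  (leftAddCoset_eq_iff H).trans QuotientAddGroup.eq.symm

theorem index_eq_of_lt_sq_mul_card {p n : ℕ} (hp : p.Prime) (hG : Nat.card G = p ^ n)
    (hH : H ≠ ⊤) (hcard : p ^ n < p ^ 2 * Nat.card H) : H.index = p := by
  obtain ⟨k, -, hk⟩ := (Nat.dvd_prime_pow hp).1 (hG ▸ H.index_dvd_card)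
  have hk0 : k ≠ 0 := by
    rintro rfl
    exact hH (index_eq_one.1 (by rwa [pow_zero] at hk))
  have hk1 : k < 2 := by
    by_contra! hk2
    have : p ^ 2 * Nat.card H ≤ p ^ n := by
      rw [← hG, ← H.index_mul_card, hk]
      exact Nat.mul_le_mul_right _ (Nat.pow_le_pow_right hp.pos hk2)
    omega
  rw [hk, show k = 1 by omega, pow_one]

theorem ncard_vadd_coset (g : G) : (g +ᵥ (H : Set G)).ncard = Nat.card H := by
  rw [Set.ncard_vadd_set]
  exact (Nat.card_coe_set_eq _).symm

variable [Finite G]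

theorem ncard_inter_vadd_coset_le (A : Set G) (g : G) :
    (A ∩ (g +ᵥ (H : Set G))).ncard ≤ Nat.card H :=
  ncard_vadd_coset (H := H) g ▸ Set.ncard_le_ncard Set.inter_subset_right (Set.toFinite _)

/-- Pigeonhole: `B` and `z - C` are both large subsets of the coset `x + H`, so they meet. -/
theorem exists_add_eq_of_card_lt_ncard_add {B C : Set G} {x y z : G}
    (hB : B ⊆ x +ᵥ (H : Set G)) (hC : C ⊆ y +ᵥ (H : Set G))
    (hcard : Nat.card H < B.ncard + C.ncard) (hz : z ∈ (x + y) +ᵥ (H : Set G)) :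
    ∃ b ∈ B, ∃ c ∈ C, b + c = z := by
  set D := (z - ·) '' C
  have hD : D ⊆ x +ᵥ (H : Set G) := by
    rintro _ ⟨c, hc, rfl⟩
    have hc := mem_vadd_coset_iff.1 (hC hc)
    rw [mem_vadd_coset_iff] at hz ⊢
    rw [QuotientAddGroup.mk_sub, ← hz, ← hc, QuotientAddGroup.mk_add, add_sub_cancel_right]
  have hBD : (B ∩ D).Nonempty := by
    have hunion := Set.ncard_union_add_ncard_inter B D
    have hle := Set.ncard_le_ncard (Set.union_subset hB hD)
    rw [ncard_vadd_coset, Set.ncard_image_of_injective _ sub_right_injective] at *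
    rw [← Set.ncard_pos]
    omega
  obtain ⟨_, hb, c, hc, rfl⟩ := hBD
  exact ⟨z - c, hb, c, hc, sub_add_cancel z c⟩

end AddSubgroup

open AddSubgroup

theorem SumFree.image_mk {G : Type*} [AddCommGroup G] [Finite G] {H : AddSubgroup G} {A : Set G}
    (hA : SumFree A) (hdense : ∀ x ∈ A, Nat.card H < 2 * (A ∩ (x +ᵥ (H : Set G))).ncard) :
    SumFree ((↑) '' A : Set (G ⧸ H)) := by
  rintro _ ⟨x, hx, rfl⟩ _ ⟨y, hy, rfl⟩ ⟨z, hz, hxyz⟩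
  have hz' : z ∈ (x + y) +ᵥ (H : Set G) := mem_vadd_coset_iff.2 hxyz.symm
  obtain ⟨b, hb, c, hc, rfl⟩ := exists_add_eq_of_card_lt_ncard_add Set.inter_subset_right
    Set.inter_subset_right (by linarith [hdense x hx, hdense y hy]) hz'
  exact hA b hb.1 c hc.1 hz

theorem exists_subset_vadd_union_neg_vadd {G : Type*} [AddCommGroup G] [Finite G]
    {H : AddSubgroup G} (hindex : H.index = 5) {A : Set G} (hA : SumFree A)
    (hcard : 3 * Nat.card H < 2 * A.ncard) {g₁ g₂ : G}
    (hsub : A ⊆ (g₁ +ᵥ (H : Set G)) ∪ (g₂ +ᵥ (H : Set G))) :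
    ∃ e : G, e ∉ H ∧ A ⊆ (e +ᵥ (H : Set G)) ∪ (-e +ᵥ (H : Set G)) := by
  have hA_le := Set.ncard_le_ncard_inter_add_ncard_inter hsub
  have h₁ := ncard_inter_vadd_coset_le (H := H) A g₁
  have h₂ := ncard_inter_vadd_coset_le (H := H) A g₂
  have hdense : ∀ x ∈ A, Nat.card H < 2 * (A ∩ (x +ᵥ (H : Set G))).ncard := by
    intro x hx
    rcases hsub hx with h | h <;>
      rw [vadd_coset_eq_iff.2 (mem_vadd_coset_iff.1 h).symm] <;> omega
  obtain ⟨a₁, ha₁A, ha₁⟩ : (A ∩ (g₁ +ᵥ (H : Set G))).Nonempty :=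
    Set.nonempty_of_ncard_ne_zero (by omega)
  obtain ⟨a₂, ha₂A, ha₂⟩ : (A ∩ (g₂ +ᵥ (H : Set G))).Nonempty :=
    Set.nonempty_of_ncard_ne_zero (by omega)
  rw [mem_vadd_coset_iff] at ha₁ ha₂
  have hpair : SumFree ({(g₁ : G ⧸ H), (g₂ : G ⧸ H)} : Set (G ⧸ H)) :=
    (hA.image_mk hdense).mono <| by
      rintro _ (rfl | rfl)
      exacts [⟨a₁, ha₁A, ha₁.symm⟩, ⟨a₂, ha₂A, ha₂.symm⟩]
  have hne : (g₁ : G ⧸ H) ≠ g₂ := by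
    intro h
    rw [← vadd_coset_eq_iff] at h
    rw [h, Set.union_self] at hsub
    have := Set.ncard_le_ncard hsub (Set.toFinite _)
    rw [ncard_vadd_coset] at this
    omega
  have hneg : (g₂ : G ⧸ H) = -g₁ :=
    eq_neg_of_add_eq_zero_right (add_eq_zero_of_sumFree_pair hindex hpair hne)
  have hg₁ : g₁ ∉ H := fun hg₁ =>
    hpair.zero_notMem (Or.inl ((QuotientAddGroup.eq_zero_iff g₁).2 hg₁).symm)
  refine ⟨g₁, hg₁, ?_⟩
  rw [vadd_coset_eq_iff.2 (by rw [QuotientAddGroup.mk_neg, hneg] : ((-g₁ : G) : G ⧸ H) = g₂)]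
  exact hsub

theorem stmt_1_general (n : ℕ) (A : Set (Fin n → ZMod 5))
    (hA : SumFree A) (hcard : 2 * A.ncard > 3 * 5 ^ (n - 1))
    (H : AddSubgroup (Fin n → ZMod 5)) (hH : H ≠ ⊤)
    (g₁ g₂ : Fin n → ZMod 5)
    (hsub : A ⊆ (g₁ +ᵥ (H : Set (Fin n → ZMod 5))) ∪ (g₂ +ᵥ (H : Set (Fin n → ZMod 5)))) :
    ∃ e : Fin n → ZMod 5, e ∉ H ∧
      A ⊆ (e +ᵥ (H : Set (Fin n → ZMod 5))) ∪ (-e +ᵥ (H : Set (Fin n → ZMod 5))) := by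
  have hG : Nat.card (Fin n → ZMod 5) = 5 ^ n := by simp
  have hA_le := Set.ncard_le_ncard_inter_add_ncard_inter hsub
  have h₁ := ncard_inter_vadd_coset_le (H := H) A g₁
  have h₂ := ncard_inter_vadd_coset_le (H := H) A g₂
  cases n with
  | zero => exact absurd (Subsingleton.elim H ⊤) hH
  | succ k =>
    rw [Nat.add_sub_cancel] at hcard
    have hindex : H.index = 5 :=
      index_eq_of_lt_sq_mul_card Nat.prime_five hG hH (by rw [pow_succ]; omega)
    have hHcard := H.index_mul_card
    rw [hindex, hG, pow_succ] at hHcard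
    exact exists_subset_vadd_union_neg_vadd hindex hA (by omega) hsub

theorem stmt_1 (n : ℕ) (hn : 1 ≤ n) (A : Set (Fin n → ZMod 5))
    (hA : SumFree A) (hcard : 2 * A.ncard > 3 * 5 ^ (n - 1))
    (H : AddSubgroup (Fin n → ZMod 5)) (hH : H ≠ ⊤)
    (g₁ g₂ : Fin n → ZMod 5)
    (hsub : A ⊆ (g₁ +ᵥ (H : Set (Fin n → ZMod 5))) ∪ (g₂ +ᵥ (H : Set (Fin n → ZMod 5)))) :
    ∃ e : Fin n → ZMod 5, e ∉ H ∧
      A ⊆ (e +ᵥ (H : Set (Fin n → ZMod 5))) ∪ (-e +ᵥ (H : Set (Fin n → ZMod 5))) :=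
  stmt_1_general n A hA hcard H hH g₁ g₂ hsub
end

section
/- Let n ≥ 1 and let A ⊆ (ℤ/5ℤ)^n be sum-free with |A| > (3/2)·5^(n-1). Then A cannot have non-empty intersection with exactly three cosets of a maximal proper subgroup of (ℤ/5ℤ)^n. -/
/-!
The quotient by a maximal subgroup `H` is `ℤ/5ℤ`; write `a_i` for the number of elements of `A`
in the coset `i`. Each `a_i` is at most `|H|`, and if `i`, `j`, `i + j` are all occupied then
`a_i + a_j ≤ |H|`: for `z ∈ A` in the coset `i + j`, the sets `A ∩ (i + H)` and `z - (A ∩ (j + H))`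
lie in `i + H` and are disjoint because `A` is sum-free. Every 3-subset of `ℤ/5ℤ` is `{x, y, z}`
with `2x` and `y + z` in it, so `|A| = a_x + (a_y + a_z) ≤ |H|/2 + |H| = (3/2)·5^(n-1)`.
-/

open Finset

theorem QuotientAddGroup.isSimpleAddGroup_of_isCoatom {G : Type*} [AddCommGroup G]
    {H : AddSubgroup G} (hH : IsCoatom H) : IsSimpleAddGroup (G ⧸ H) := by
  have e : AddSubgroup (G ⧸ H) ≃o Set.Ici H := comapMk'OrderIso H
  have : IsSimpleOrder (AddSubgroup (G ⧸ H)) :=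
    e.isSimpleOrder_iff.mpr (Set.isSimpleOrder_Ici_iff_isCoatom.mpr hH)
  have : Nontrivial (G ⧸ H) := AddSubgroup.nontrivial_iff.mp inferInstance
  exact ⟨fun K _ ↦ IsSimpleOrder.eq_bot_or_eq_top K⟩

theorem QuotientAddGroup.nonempty_addEquiv_zmod_of_isCoatom {G : Type*} [AddCommGroup G]
    {p n : ℕ} (hp : p.Prime) (hG : Nat.card G = p ^ n) {H : AddSubgroup G}
    (hH : IsCoatom H) : Nonempty (G ⧸ H ≃+ ZMod p) := by
  have := isSimpleAddGroup_of_isCoatom hH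
  have hprime : (Nat.card (G ⧸ H)).Prime := AddCommGroup.is_simple_iff_prime_card.mp this
  have hcard : Nat.card (G ⧸ H) = p := by
    have hdvd := hG ▸ H.card_quotient_dvd_card
    exact (Nat.prime_dvd_prime_iff_eq hprime hp).mp (hprime.dvd_of_dvd_pow hdvd)
  have e := zmodAddCyclicAddEquiv (G := G ⧸ H) IsSimpleAddGroup.isAddCyclic
  rw [hcard] at e
  exact ⟨e.symm⟩

theorem AddMonoidHom.card_mul_card_fiber_zero {G Q : Type*} [AddGroup G] [Fintype G]
    [AddGroup Q] [Fintype Q] [DecidableEq Q] (f : G →+ Q) (hf : Function.Surjective f) :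
    Fintype.card Q * #{g | f g = 0} = Fintype.card G := by
  calc Fintype.card Q * #{g | f g = 0} = ∑ q, #{g | f g = q} := by
        rw [sum_congr rfl fun q _ ↦ card_fiber_eq_of_mem_range f (hf q) ⟨0, map_zero f⟩,
          sum_const, card_univ, smul_eq_mul]
    _ = Fintype.card G := by
        rw [← card_univ, card_eq_sum_card_image f univ, image_univ_of_surjective hf]

theorem ZMod.exists_add_self_mem_and_add_mem {B : Finset (ZMod 5)} (hB : #B = 3) :
    ∃ x y z, x ∉ ({y, z} : Finset _) ∧ y ≠ z ∧ B = {x, y, z} ∧ x + x ∈ B ∧ y + z ∈ B := by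
  obtain ⟨x, y, z, hxy, hxz, hyz, rfl⟩ := card_eq_three.mp hB
  have key : ∀ x y z : ZMod 5, x ≠ y → x ≠ z → y ≠ z →
      (x + x ∈ ({x, y, z} : Finset _) ∧ y + z ∈ ({x, y, z} : Finset _)) ∨
      (y + y ∈ ({x, y, z} : Finset _) ∧ x + z ∈ ({x, y, z} : Finset _)) ∨
      (z + z ∈ ({x, y, z} : Finset _) ∧ x + y ∈ ({x, y, z} : Finset _)) := by
    decide
  rcases key x y z hxy hxz hyz with h | h | h
  · exact ⟨x, y, z, by simp [hxy, hxz], hyz, rfl, h⟩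
  · refine ⟨y, x, z, by simp [hxy.symm, hyz], hxz, ?_, h⟩
    ext; simp only [mem_insert, mem_singleton]; tauto
  · refine ⟨z, x, y, by simp [hxz.symm, hyz.symm], hxy, ?_, h⟩
    ext; simp only [mem_insert, mem_singleton]; tauto

section Fibers

variable {G Q : Type*} [AddGroup G] [Fintype G] [AddGroup Q] [DecidableEq Q] (f : G →+ Q)

theorem AddMonoidHom.card_fiber_le_card_fiber_zero (i : Q) :
    #{g | f g = i} ≤ #{g | f g = 0} := by
  by_cases hi : i ∈ Set.range f
  · exact (card_fiber_eq_of_mem_range f hi ⟨0, map_zero f⟩).le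
  · simp only [Set.mem_range, not_exists] at hi
    simp [hi]

theorem SumFree.card_filter_add_card_filter_le [DecidableEq G] {A : Finset G}
    (hA : SumFree (A : Set G)) {i j : Q} (hij : i + j ∈ A.image f) :
    #{x ∈ A | f x = i} + #{x ∈ A | f x = j} ≤ #{g | f g = 0} := by
  obtain ⟨z, hzA, hz⟩ := mem_image.mp hij
  set S := {x ∈ A | f x = i}
  set T := {x ∈ A | f x = j}.image (z - ·)
  have hT : #T = #{x ∈ A | f x = j} := card_image_of_injective _ sub_right_injective
  have hdisj : Disjoint S T := by
    refine disjoint_left.mpr fun x hxS hxT ↦ ?_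
    obtain ⟨y, hy, rfl⟩ := mem_image.mp hxT
    exact hA _ (mem_filter.mp hxS).1 y (mem_filter.mp hy).1 (by simpa using hzA)
  have hsub : S ∪ T ⊆ ({g | f g = i} : Finset G) := by
    intro x hx
    rcases mem_union.mp hx with hx | hx
    · simpa using (mem_filter.mp hx).2
    · obtain ⟨y, hy, rfl⟩ := mem_image.mp hx
      simp [hz, (mem_filter.mp hy).2]
  calc #S + #{x ∈ A | f x = j} = #(S ∪ T) := by rw [card_union_of_disjoint hdisj, hT]
    _ ≤ #{g | f g = i} := card_le_card hsub
    _ ≤ #{g | f g = 0} := f.card_fiber_le_card_fiber_zero i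

end Fibers

theorem SumFree.two_mul_card_le_of_card_image_eq_three {G : Type*} [AddGroup G] [Fintype G]
    [DecidableEq G] {A : Finset G} (hA : SumFree (A : Set G)) (f : G →+ ZMod 5)
    (h3 : #(A.image f) = 3) : 2 * #A ≤ 3 * #{g | f g = 0} := by
  obtain ⟨x, y, z, hx, hyz, hB, hxx, hyz'⟩ := ZMod.exists_add_self_mem_and_add_mem h3
  have hsum : #A = #{a ∈ A | f a = x} + #{a ∈ A | f a = y} + #{a ∈ A | f a = z} := by
    rw [card_eq_sum_card_image f A, hB, sum_insert hx, sum_pair hyz, add_assoc]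
  have hx2 := hA.card_filter_add_card_filter_le f hxx
  have hyz2 := hA.card_filter_add_card_filter_le f hyz'
  omega

theorem stmt_2_general (n : ℕ) (A : Set (Fin n → ZMod 5))
    (hA : SumFree A) (hcard : 2 * A.ncard > 3 * 5 ^ (n - 1))
    (H : AddSubgroup (Fin n → ZMod 5)) (hH : IsCoatom H) :
    (QuotientAddGroup.mk '' A : Set ((Fin n → ZMod 5) ⧸ H)).ncard ≠ 3 := by
  classical
  intro h3
  obtain ⟨e⟩ :=
    QuotientAddGroup.nonempty_addEquiv_zmod_of_isCoatom Nat.prime_five (n := n) (by simp) hH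
  set f : (Fin n → ZMod 5) →+ ZMod 5 := e.toAddMonoidHom.comp (QuotientAddGroup.mk' H)
  have hf : Function.Surjective f := e.surjective.comp (QuotientAddGroup.mk'_surjective H)
  lift A to Finset (Fin n → ZMod 5) using A.toFinite
  have h3' : #(A.image f) = 3 := by
    rw [← Set.ncard_image_of_injective _ e.injective, Set.image_image] at h3
    rwa [← Set.ncard_coe_finset, coe_image]
  have hbound := hA.two_mul_card_le_of_card_image_eq_three f h3'
  have hfiber := f.card_mul_card_fiber_zero hf
  rw [ZMod.card, Fintype.card_pi, prod_const, card_univ, Fintype.card_fin, ZMod.card] at hfiber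
  rw [Set.ncard_coe_finset] at hcard
  cases n with
  | zero => omega
  | succ m =>
    rw [pow_succ] at hfiber
    rw [Nat.add_sub_cancel] at hcard
    omega

theorem stmt_2 (n : ℕ) (hn : 1 ≤ n) (A : Set (Fin n → ZMod 5))
    (hA : SumFree A) (hcard : 2 * A.ncard > 3 * 5 ^ (n - 1))
    (H : AddSubgroup (Fin n → ZMod 5)) (hH : IsCoatom H) :
    (QuotientAddGroup.mk '' A : Set ((Fin n → ZMod 5) ⧸ H)).ncard ≠ 3 :=
  stmt_2_general n A hA hcard H hH
end

section
/- Let n ≥ 1, let A ⊆ (ℤ/5ℤ)^n be sum-free, and let H < (ℤ/5ℤ)^n be a maximal proper subgroup. If some H-coset contains more than half of its elements in A (i.e., |A ∩ (g+H)| > |H|/2 for some g), then A has non-empty intersection with at most three H-cosets. -/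
/-!
Write `B = A ∩ (g + H)`, so `2|B| > |H|`. For `z ∈ A`, both `z + B` and `z - B` avoid `A`
(sum-freeness), and they lie in the cosets `z + g + H` and `z - g + H`. If either of these were
`g + H`, it would contain two disjoint sets of size `> |H|/2`. Hence no element of `A` lies in the
cosets `H` or `2g + H`; in particular `g ∉ H`, as `B` is nonempty. Since `H` is a maximal
subgroup of an elementary abelian `p`-group, the cosets are then `kg + H` for `k < p`, so `A`
meets at most `p - 2` of them.
-/

open Pointwise

variable {G : Type*} [AddCommGroup G] {H : AddSubgroup G}

section Counting

variable [Finite G] {A : Set G}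

lemma ncard_add_ncard_le_of_subset_vadd {X Y : Set G} {c : G} (hX : X ⊆ c +ᵥ (H : Set G))
    (hY : Y ⊆ c +ᵥ (H : Set G)) (hXY : Disjoint X Y) : X.ncard + Y.ncard ≤ Nat.card H := by
  rw [← Set.ncard_union_eq hXY (Set.toFinite X) (Set.toFinite Y)]
  calc (X ∪ Y).ncard ≤ (c +ᵥ (H : Set G)).ncard :=
        Set.ncard_le_ncard (Set.union_subset hX hY) (Set.toFinite _)
    _ = Nat.card H := by rw [Set.ncard_vadd_set, ← Nat.card_coe_set_eq]; rfl

lemma SumFree.ncard_inter_vadd_add_le (hA : SumFree A) {z : G} (hz : z ∈ A) (c : G) :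
    (A ∩ (c +ᵥ (H : Set G))).ncard + (A ∩ ((z + c) +ᵥ (H : Set G))).ncard ≤ Nat.card H := by
  rw [← Set.ncard_image_of_injective _ (add_right_injective z)]
  refine ncard_add_ncard_le_of_subset_vadd ?_ Set.inter_subset_right ?_
  · rintro _ ⟨_, ⟨-, h, hh, rfl⟩, rfl⟩
    exact ⟨h, hh, by simp only [vadd_eq_add, add_assoc]⟩
  · rw [Set.disjoint_left]
    rintro _ ⟨b, hb, rfl⟩ hzb
    exact hA z hz b hb.1 hzb.1

lemma SumFree.ncard_inter_vadd_sub_le (hA : SumFree A) {z : G} (hz : z ∈ A) (c : G) :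
    (A ∩ (c +ᵥ (H : Set G))).ncard + (A ∩ ((z - c) +ᵥ (H : Set G))).ncard ≤ Nat.card H := by
  rw [← Set.ncard_image_of_injective _ (sub_right_injective (b := z))]
  refine ncard_add_ncard_le_of_subset_vadd ?_ Set.inter_subset_right ?_
  · rintro _ ⟨_, ⟨-, h, hh, rfl⟩, rfl⟩
    exact ⟨-h, neg_mem hh, by simp only [vadd_eq_add]; abel⟩
  · rw [Set.disjoint_left]
    rintro _ ⟨b, hb, rfl⟩ hzb
    exact hA _ hzb.1 b hb.1 (by rwa [sub_add_cancel])

variable {g : G} (hrich : 2 * (A ∩ (g +ᵥ (H : Set G))).ncard > Nat.card H)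
include hrich

lemma SumFree.mk_ne_zero_of_rich (hA : SumFree A) {z : G} (hz : z ∈ A) :
    (z : G ⧸ H) ≠ 0 := by
  intro hzH
  have hcoset : (z + g) +ᵥ (H : Set G) = g +ᵥ (H : Set G) := by
    rw [leftAddCoset_eq_iff]
    convert neg_mem ((QuotientAddGroup.eq_zero_iff z).1 hzH) using 1
    abel
  have := hA.ncard_inter_vadd_add_le (H := H) hz g
  rw [hcoset] at this
  omega

lemma SumFree.mk_ne_two_nsmul_of_rich (hA : SumFree A) {z : G} (hz : z ∈ A) :
    (z : G ⧸ H) ≠ 2 • (g : G ⧸ H) := by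
  intro hz2g
  have hcoset : (z - g) +ᵥ (H : Set G) = g +ᵥ (H : Set G) := by
    rw [← QuotientAddGroup.mk_nsmul, QuotientAddGroup.eq] at hz2g
    rw [leftAddCoset_eq_iff]
    convert hz2g using 1
    abel
  have := hA.ncard_inter_vadd_sub_le (H := H) hz g
  rw [hcoset] at this
  omega

lemma SumFree.rich_coset_ne_zero (hA : SumFree A) : (g : G ⧸ H) ≠ 0 := by
  obtain ⟨z, hzA, hzg⟩ : (A ∩ (g +ᵥ (H : Set G))).Nonempty := by
    rw [← Set.ncard_pos (Set.toFinite _)]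
    omega
  rw [QuotientAddGroup.eq.2 ((mem_leftAddCoset_iff g).1 hzg)]
  exact hA.mk_ne_zero_of_rich hrich hzA

end Counting

lemma AddSubgroup.mk_mem_zmultiples_of_isCoatom (hH : IsCoatom H) {g : G}
    (hg : (g : G ⧸ H) ≠ 0) (x : G) : (x : G ⧸ H) ∈ AddSubgroup.zmultiples (g : G ⧸ H) := by
  have hlt : H < (AddSubgroup.zmultiples (g : G ⧸ H)).comap (QuotientAddGroup.mk' H) := by
    refine SetLike.lt_iff_le_and_exists.2 ⟨fun h hh => ?_, g, AddSubgroup.mem_zmultiples _, ?_⟩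
    · simp [(QuotientAddGroup.eq_zero_iff h).2 hh]
    · rwa [← QuotientAddGroup.eq_zero_iff]
  exact (hH.2 _ hlt ▸ AddSubgroup.mem_top x :
    x ∈ (AddSubgroup.zmultiples (g : G ⧸ H)).comap (QuotientAddGroup.mk' H))

lemma exists_lt_nsmul_eq_of_isCoatom {p : ℕ} [Fact p.Prime] (hp : ∀ x : G, p • x = 0)
    (hH : IsCoatom H) {g : G} (hg : (g : G ⧸ H) ≠ 0) (x : G) :
    ∃ k < p, k • (g : G ⧸ H) = x := by
  classical
  have hord : addOrderOf (g : G ⧸ H) = p :=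
    addOrderOf_eq_prime (by rw [← QuotientAddGroup.mk_nsmul, hp, QuotientAddGroup.mk_zero]) hg
  have hfin : IsOfFinAddOrder (g : G ⧸ H) := addOrderOf_pos_iff.1 (hord ▸ Nat.Prime.pos Fact.out)
  simpa [hord] using hfin.mem_zmultiples_iff_mem_range_addOrderOf.1
    (AddSubgroup.mk_mem_zmultiples_of_isCoatom hH hg x)

theorem SumFree.ncard_image_mk_le_of_rich [Finite G] {p : ℕ} [Fact p.Prime] (hp2 : p ≠ 2)
    (hp : ∀ x : G, p • x = 0) {A : Set G} (hA : SumFree A) (hH : IsCoatom H) {g : G}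
    (hrich : 2 * (A ∩ (g +ᵥ (H : Set G))).ncard > Nat.card H) :
    (QuotientAddGroup.mk '' A : Set (G ⧸ H)).ncard ≤ p - 2 := by
  classical
  have hg := hA.rich_coset_ne_zero hrich
  have hsub : (QuotientAddGroup.mk '' A : Set (G ⧸ H)) ⊆
      ((((Finset.range p).erase 0).erase 2).image (· • (g : G ⧸ H)) : Set (G ⧸ H)) := by
    rintro _ ⟨z, hz, rfl⟩
    obtain ⟨k, hkp, hk⟩ := exists_lt_nsmul_eq_of_isCoatom hp hH hg z
    have hk0 : k ≠ 0 := by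
      rintro rfl
      exact hA.mk_ne_zero_of_rich hrich hz (by rw [← hk, zero_smul])
    have hk2 : k ≠ 2 := by
      rintro rfl
      exact hA.mk_ne_two_nsmul_of_rich hrich hz hk.symm
    simp only [Finset.coe_image, Finset.coe_erase, Finset.coe_range]
    exact ⟨k, ⟨⟨hkp, hk0⟩, hk2⟩, hk⟩
  have hp3 : 2 < p := lt_of_le_of_ne (Nat.Prime.two_le Fact.out) (Ne.symm hp2)
  calc (QuotientAddGroup.mk '' A : Set (G ⧸ H)).ncard
      ≤ ((((Finset.range p).erase 0).erase 2).image (· • (g : G ⧸ H))).card := by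
        rw [← Set.ncard_coe_finset]
        exact Set.ncard_le_ncard hsub (Finset.finite_toSet _)
    _ ≤ (((Finset.range p).erase 0).erase 2).card := Finset.card_image_le
    _ = p - 2 := by
        rw [Finset.card_erase_of_mem (by simp [hp3]),
          Finset.card_erase_of_mem (Finset.mem_range.2 (by omega)), Finset.card_range]
        omega

theorem stmt_3_general (n : ℕ) (A : Set (Fin n → ZMod 5))
    (hA : SumFree A)
    (H : AddSubgroup (Fin n → ZMod 5)) (hH : IsCoatom H)
    (g : Fin n → ZMod 5)
    (hrich : 2 * (A ∩ (g +ᵥ (H : Set (Fin n → ZMod 5)))).ncard > Nat.card H) :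
    (QuotientAddGroup.mk '' A : Set ((Fin n → ZMod 5) ⧸ H)).ncard ≤ 3 := by
  have : Fact (Nat.Prime 5) := ⟨Nat.prime_five⟩
  have h5 : ∀ x : Fin n → ZMod 5, 5 • x = 0 := fun x => by
    ext i
    simp [show (5 : ZMod 5) = 0 from rfl]
  exact hA.ncard_image_mk_le_of_rich (by norm_num) h5 hH hrich

theorem stmt_3 (n : ℕ) (hn : 1 ≤ n) (A : Set (Fin n → ZMod 5))
    (hA : SumFree A)
    (H : AddSubgroup (Fin n → ZMod 5)) (hH : IsCoatom H)
    (g : Fin n → ZMod 5)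
    (hrich : 2 * (A ∩ (g +ᵥ (H : Set (Fin n → ZMod 5)))).ncard > Nat.card H) :
    (QuotientAddGroup.mk '' A : Set ((Fin n → ZMod 5) ⧸ H)).ncard ≤ 3 :=
  stmt_3_general n A hA H hH g hrich
end

section
/- Let n ≥ 1 and let A, B, C ⊆ (ℤ/5ℤ)^n with (A + B) ∩ C = ∅, C ≠ ∅, and min{|A|, |B|} > 2·5^(n-1). Then |A| + |B| + 2|C| ≤ 6·5^(n-1). -/
/-!
Hamidoune's isoperimetric method. For `S` in a finite abelian group `G`, call `X` admissible if
it is nonempty and `X + S ≠ G`, and a fragment if it minimizes `|X + S| - |X|` among these.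
Fragments of `S` and of `-S` correspond through `X ↦ (X + S)ᶜ`, and submodularity of
`X ↦ |X + S|` shows that two fragments of minimal size are equal or disjoint; as fragments are
translation invariant, a minimal one through `0` is a subgroup `H`. Hence
`|A + B| - |A| ≥ |H + B| - |H|` whenever `A + B ≠ G`.

In `G = (ℤ/5ℤ)ⁿ` the subgroup `H` is proper, of order `5ᵗ` with `t < n`, and `H + B` is a union of
`H`-cosets with more than `2·5ⁿ⁻¹` elements, so `|A + B| ≥ |A| + 2·5ⁿ⁻¹`, and symmetrically
`|A + B| ≥ |B| + 2·5ⁿ⁻¹`. Adding these to `|A + B| + |C| ≤ 5ⁿ` gives the claim.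
-/

open Finset Pointwise

namespace Hamidoune

variable {G : Type*} [AddCommGroup G] [DecidableEq G] {S A X Y P Q : Finset G}

def boundary (S X : Finset G) : ℤ := #(X + S) - #X

lemma boundary_union_add_boundary_inter_le (S X Y : Finset G) :
    boundary S (X ∪ Y) + boundary S (X ∩ Y) ≤ boundary S X + boundary S Y := by
  have h₁ := card_union_add_card_inter X Y
  have h₂ := card_union_add_card_inter (X + S) (Y + S)
  have h₃ := card_le_card (inter_add_subset (s₁ := X) (s₂ := Y) (t := S))
  rw [boundary, boundary, boundary, boundary, union_add]
  omega

lemma boundary_add_singleton (S X : Finset G) (g : G) : boundary S (X + {g}) = boundary S X := by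
  simp only [boundary, add_right_comm X {g} S, card_add_singleton]

variable [Fintype G]

def IsAdmissible (S X : Finset G) : Prop := X.Nonempty ∧ X + S ≠ univ

def IsFragment (S X : Finset G) : Prop :=
  IsAdmissible S X ∧ ∀ Y, IsAdmissible S Y → boundary S X ≤ boundary S Y

/-- Atoms are minimal among the fragments of `S` and of `-S` together: this is what makes two
atoms of `S` either equal or disjoint. -/
def IsAtom (S X : Finset G) : Prop :=
  IsFragment S X ∧ ∀ Y, IsFragment S Y ∨ IsFragment (-S) Y → #X ≤ #Y

lemma IsAdmissible.mono (hY : IsAdmissible S Y) (hX : X.Nonempty) (hXY : X ⊆ Y) :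
    IsAdmissible S X :=
  ⟨hX, fun h => hY.2 <| univ_subset_iff.1 <| h ▸ add_subset_add_right hXY⟩

lemma IsAdmissible.exists_isFragment (hX : IsAdmissible S X) : ∃ F, IsFragment S F := by
  classical
  obtain ⟨F, hF, hmin⟩ := exists_min_image {Y | IsAdmissible S Y} (boundary S) ⟨X, by simpa⟩
  simp only [mem_filter, mem_univ, true_and] at hF hmin
  exact ⟨F, hF, hmin⟩

lemma IsFragment.boundary_eq (hX : IsFragment S X) (hY : IsFragment S Y) :
    boundary S X = boundary S Y :=
  (hX.2 Y hY.1).antisymm (hY.2 X hX.1)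

lemma compl_add_add_neg_subset (X S : Finset G) : (X + S)ᶜ + -S ⊆ Xᶜ := by
  intro z hz
  obtain ⟨y, hy, w, hw, rfl⟩ := mem_add.1 hz
  obtain ⟨s, hs, rfl⟩ := mem_neg.1 hw
  rw [mem_compl] at hy ⊢
  exact fun h => hy (mem_add.2 ⟨y + -s, h, s, hs, by abel⟩)

lemma IsAdmissible.compl_add (hX : IsAdmissible S X) : IsAdmissible (-S) (X + S)ᶜ := by
  refine ⟨nonempty_iff_ne_empty.2 (by rw [Ne, compl_eq_empty_iff]; exact hX.2), fun h => ?_⟩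
  have := univ_subset_iff.1 (h ▸ compl_add_add_neg_subset X S)
  exact hX.1.ne_empty ((compl_eq_univ_iff X).1 this)

lemma boundary_neg_compl_add_le (S X : Finset G) : boundary (-S) (X + S)ᶜ ≤ boundary S X := by
  have h := card_le_card (compl_add_add_neg_subset X S)
  have := card_le_univ X
  have := card_le_univ (X + S)
  rw [card_compl] at h
  rw [boundary, boundary, card_compl]
  omega

lemma IsFragment.compl_add (hX : IsFragment S X) : IsFragment (-S) (X + S)ᶜ := by
  refine ⟨hX.1.compl_add, fun Y hY => ?_⟩
  have hdual := boundary_neg_compl_add_le (-S) Y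
  rw [neg_neg] at hdual
  calc boundary (-S) (X + S)ᶜ ≤ boundary S X := boundary_neg_compl_add_le S X
    _ ≤ boundary S (Y + -S)ᶜ := hX.2 _ (by simpa using hY.compl_add)
    _ ≤ boundary (-S) Y := hdual

lemma IsFragment.of_neg (hX : IsFragment (-S) X) (hXneg : -X = X) : IsFragment S X := by
  have hadd : X + S = -(X + -S) := by rw [neg_add, hXneg, neg_neg]
  have hbd : boundary S X = boundary (-S) X := by simp only [boundary, hadd, card_neg]
  refine ⟨⟨hX.1.1, ?_⟩, fun Y hY => ?_⟩
  · rw [hadd, Ne, neg_eq_iff_eq_neg, neg_univ]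
    exact hX.1.2
  · rw [hbd]
    exact (hX.2 _ hY.compl_add).trans (boundary_neg_compl_add_le S Y)

lemma IsAdmissible.add_singleton (hX : IsAdmissible S X) (g : G) : IsAdmissible S (X + {g}) := by
  refine ⟨hX.1.add (singleton_nonempty g), ?_⟩
  rw [add_right_comm, Ne, ← card_eq_iff_eq_univ, card_add_singleton, card_eq_iff_eq_univ]
  exact hX.2

lemma IsFragment.add_singleton (hX : IsFragment S X) (g : G) : IsFragment S (X + {g}) :=
  ⟨hX.1.add_singleton g, fun Y hY => boundary_add_singleton S X g ▸ hX.2 Y hY⟩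

lemma IsAtom.add_singleton (hX : IsAtom S X) (g : G) : IsAtom S (X + {g}) :=
  ⟨hX.1.add_singleton g, fun Y hY => card_add_singleton X g ▸ hX.2 Y hY⟩

lemma IsAtom.card_eq (hP : IsAtom S P) (hQ : IsAtom S Q) : #P = #Q :=
  (hP.2 Q (.inl hQ.1)).antisymm (hQ.2 P (.inl hP.1))

lemma IsAtom.card_le_card_compl_add (hP : IsAtom S P) : #P ≤ #(P + S)ᶜ :=
  hP.2 _ (.inr hP.1.compl_add)

lemma IsAtom.eq_of_not_disjoint (hP : IsAtom S P) (hQ : IsAtom S Q) (hPQ : ¬Disjoint P Q) :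
    P = Q := by
  have hZ : IsAdmissible S (P ∩ Q) :=
    hP.1.1.mono (not_disjoint_iff_nonempty_inter.1 hPQ) inter_subset_left
  suffices hZfrag : IsFragment S (P ∩ Q) by
    have hZP : P ∩ Q = P := eq_of_subset_of_card_le inter_subset_left (hP.2 _ (.inl hZfrag))
    exact eq_of_subset_of_card_le (hZP ▸ inter_subset_right) (hP.card_eq hQ).ge
  have hsub := boundary_union_add_boundary_inter_le S P Q
  have hbPQ := hP.1.boundary_eq hQ.1
  have hZP := hP.1.2 _ hZ
  refine ⟨hZ, fun Y hY => le_trans ?_ (hP.1.2 Y hY)⟩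
  by_cases hU : IsAdmissible S (P ∪ Q)
  · linarith [hP.1.2 _ hU]
  · -- Here `P ∪ Q + S = univ`, and submodularity gives `#(P + S)ᶜ < #P`, against the minimality
    -- of `P` among the fragments of `-S`.
    have hcover : P ∪ Q + S = univ :=
      not_not.1 fun h => hU ⟨hP.1.1.1.mono subset_union_left, h⟩
    have hcompl := hP.card_le_card_compl_add
    have hcard := card_union_add_card_inter P Q
    have hQP := hP.card_eq hQ
    have hZpos := hZ.1.card_pos
    have := card_le_univ (P + S)
    rw [card_compl] at hcompl
    rw [boundary, hcover, card_univ] at hsub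
    unfold boundary at hsub hbPQ hZP ⊢
    omega

lemma IsAtom.exists_addSubgroup (hP : IsAtom S P) (h0 : (0 : G) ∈ P) :
    ∃ H : AddSubgroup G, (H : Set G) = P := by
  have hsub : ∀ g ∈ P, ∀ x ∈ P, x + -g ∈ P := by
    intro g hg x hx
    have h0' : (0 : G) ∈ P + {-g} := mem_add.2 ⟨g, hg, -g, mem_singleton_self _, add_neg_cancel g⟩
    have heq : P + {-g} = P :=
      (hP.add_singleton (-g)).eq_of_not_disjoint hP (not_disjoint_iff.2 ⟨0, h0', h0⟩)
    exact heq ▸ mem_add.2 ⟨x, hx, -g, mem_singleton_self _, rfl⟩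
  exact ⟨AddSubgroup.ofSub P ⟨0, h0⟩ fun x hx y hy => hsub y hy x hx, rfl⟩

lemma IsAtom.exists_addSubgroup_isFragment (hP : IsAtom S P) :
    ∃ (H : AddSubgroup G) (Q : Finset G), (Q : Set G) = H ∧ IsFragment S Q := by
  obtain ⟨p, hp⟩ := hP.1.1.1
  obtain ⟨H, hH⟩ := (hP.add_singleton (-p)).exists_addSubgroup
    (mem_add.2 ⟨p, hp, -p, mem_singleton_self _, add_neg_cancel p⟩)
  exact ⟨H, _, hH.symm, (hP.add_singleton (-p)).1⟩

lemma IsAdmissible.exists_isAtom (hX : IsAdmissible S X) : ∃ P, IsAtom S P ∨ IsAtom (-S) P := by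
  classical
  obtain ⟨F, hF⟩ := hX.exists_isFragment
  obtain ⟨P, hP, hmin⟩ := exists_min_image {Y | IsFragment S Y ∨ IsFragment (-S) Y} card
    ⟨F, by simpa using .inl hF⟩
  simp only [mem_filter, mem_univ, true_and] at hP hmin
  refine ⟨P, hP.imp (fun h => ⟨h, hmin⟩) (fun h => ⟨h, fun Y hY => hmin Y ?_⟩)⟩
  rwa [neg_neg, or_comm] at hY

theorem IsAdmissible.exists_addSubgroup_isFragment (hX : IsAdmissible S X) :
    ∃ (H : AddSubgroup G) (Q : Finset G), (Q : Set G) = H ∧ IsFragment S Q := by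
  obtain ⟨P, hP | hP⟩ := hX.exists_isAtom
  · exact hP.exists_addSubgroup_isFragment
  · obtain ⟨H, Q, hQ, hfrag⟩ := hP.exists_addSubgroup_isFragment
    exact ⟨H, Q, hQ, hfrag.of_neg (coe_injective (by rw [coe_neg, hQ, neg_coe_set]))⟩

theorem exists_addSubgroup_card_add_le (hA : A.Nonempty) (hAS : A + S ≠ univ) :
    ∃ (H : AddSubgroup G) (P : Finset G), (P : Set G) = H ∧ P + S ≠ univ ∧
      #(P + S) + #A ≤ #(A + S) + #P := by
  obtain ⟨H, P, hP, hfrag⟩ := IsAdmissible.exists_addSubgroup_isFragment ⟨hA, hAS⟩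
  have := hfrag.2 A ⟨hA, hAS⟩
  rw [boundary, boundary] at this
  exact ⟨H, P, hP, hfrag.1.2, by omega⟩

end Hamidoune

lemma card_dvd_card_add_of_coe_eq_addSubgroup {G : Type*} [AddGroup G] [DecidableEq G]
    {H : AddSubgroup G} {P : Finset G} (hP : (P : Set G) = H) (S : Finset G) :
    #P ∣ #(P + S) := by
  have memP : ∀ x, x ∈ P ↔ x ∈ H := fun x => by rw [← mem_coe, hP, SetLike.mem_coe]
  refine card_dvd_card_add_left ?_
  rintro _ ⟨b, -, rfl⟩ _ ⟨c, -, rfl⟩ hne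
  refine disjoint_left.2 fun x (hxb : x ∈ P.image (· + b)) (hxc : x ∈ P.image (· + c)) => hne ?_
  simp only [mem_image] at hxb hxc
  obtain ⟨p, hp, rfl⟩ := hxb
  obtain ⟨q, hq, hqp⟩ := hxc
  have hc : c = -q + p + b := by rw [add_assoc, ← hqp, neg_add_cancel_left]
  ext y
  simp only [mem_image]
  constructor
  · rintro ⟨r, hr, rfl⟩
    refine ⟨r + -p + q, (memP _).2 ?_, by rw [hc]; simp [add_assoc]⟩
    exact add_mem (add_mem ((memP r).1 hr) (neg_mem ((memP p).1 hp))) ((memP q).1 hq)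
  · rintro ⟨r, hr, rfl⟩
    refine ⟨r + -q + p, (memP _).2 ?_, by rw [hc]; simp [add_assoc]⟩
    exact add_mem (add_mem ((memP r).1 hr) (neg_mem ((memP q).1 hq))) ((memP p).1 hp)

theorem card_add_mul_pow_le_card_add {G : Type*} [AddCommGroup G] [Fintype G] [DecidableEq G]
    {p n k : ℕ} (hp : p.Prime) (hG : Fintype.card G = p ^ n) {A B : Finset G}
    (hA : A.Nonempty) (hAB : A + B ≠ univ) (hB : k * p ^ (n - 1) < #B) :
    #A + k * p ^ (n - 1) ≤ #(A + B) := by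
  obtain ⟨H, P, hP, hPB, hcard⟩ := Hamidoune.exists_addSubgroup_card_add_le hA hAB
  have hPG : #P ∣ p ^ n := by
    have := H.card_addSubgroup_dvd_card
    rwa [← SetLike.coe_sort_coe, ← hP, Nat.card_coe_set_eq, Set.ncard_coe_finset,
      Nat.card_eq_fintype_card, hG] at this
  obtain ⟨t, ht, hPt⟩ := (Nat.dvd_prime_pow hp).1 hPG
  have hPBG : #(P + B) < p ^ n := hG ▸ (card_lt_iff_ne_univ _).2 hPB
  have hBPB : #B ≤ #(P + B) :=
    card_le_card_add_left ⟨0, by rw [← mem_coe, hP]; exact H.zero_mem⟩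
  have hPPB := card_dvd_card_add_of_coe_eq_addSubgroup hP B
  have htn : t ≤ n - 1 := by
    by_contra h
    have hteq : t = n := by omega
    have := Nat.le_of_dvd (by omega) (hteq ▸ hPt ▸ hPPB)
    omega
  have hPk : #P ∣ k * p ^ (n - 1) := hPt ▸ (pow_dvd_pow p htn).mul_left k
  have := Nat.le_of_lt_add_of_dvd (n := #P) (a := k * p ^ (n - 1) + #P) (by omega)
    (dvd_add hPk dvd_rfl) hPPB
  omega

theorem stmt_4 (n : ℕ) (hn : 1 ≤ n) (A B C : Set (Fin n → ZMod 5))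
    (hAB : (A + B) ∩ C = ∅) (hC : C.Nonempty)
    (hAcard : A.ncard > 2 * 5 ^ (n - 1)) (hBcard : B.ncard > 2 * 5 ^ (n - 1)) :
    A.ncard + B.ncard + 2 * C.ncard ≤ 6 * 5 ^ (n - 1) := by
  classical
  obtain ⟨A, rfl⟩ := A.toFinite.exists_finset_coe
  obtain ⟨B, rfl⟩ := B.toFinite.exists_finset_coe
  obtain ⟨C, rfl⟩ := C.toFinite.exists_finset_coe
  rw [← coe_add, ← coe_inter, coe_eq_empty, ← disjoint_iff_inter_eq_empty] at hAB
  simp only [Set.ncard_coe_finset] at hAcard hBcard ⊢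
  have hG : Fintype.card (Fin n → ZMod 5) = 5 ^ n := by simp
  have hABu : A + B ≠ univ := fun h => by
    obtain ⟨c, hc⟩ := hC
    exact disjoint_left.1 hAB (h ▸ mem_univ c) hc
  have hA := card_add_mul_pow_le_card_add Nat.prime_five hG (card_pos.1 (by omega)) hABu hBcard
  have hB := card_add_mul_pow_le_card_add Nat.prime_five hG (card_pos.1 (by omega))
    (add_comm A B ▸ hABu) hAcard
  have hABC : #(A + B) + #C ≤ 5 ^ n := hG ▸ card_union_of_disjoint hAB ▸ card_le_univ _
  have h5 : 5 ^ n = 5 * 5 ^ (n - 1) := by rw [← pow_succ', Nat.sub_add_cancel hn]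
  rw [add_comm B A] at hB
  omega
end

section
/- Let n ≥ 1 and let A ⊆ (ℤ/5ℤ)^n be sum-free with |A| > (3/2)·5^(n-1). If H < (ℤ/5ℤ)^n is a maximal proper subgroup such that every H-coset contains fewer than |H|/2 elements of A, then there is at most one H-coset containing more than (2/5)|H| elements of A. -/
/-!
Write `a q` for the number of elements of `A` in the coset `q` of `H`; here `G ⧸ H ≃ ZMod 5`.
Translating the parts of `A` in cosets `q`, `r`, `q + r` into `H` gives `X, Y, W ⊆ H` with
`X + Y` disjoint from `W`. A Kemperman-type lemma, proved with Dyson e-transforms, provides a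
subgroup `K` and a `K`-stable `D ⊆ X + Y` with `|X| + |Y| ≤ |D| + |K|`; since `|H|` is a power
of `5`, a case analysis on `[H : K]` (with a second round inside a single `K`-coset when
`[H : K] = 5` and `D` misses exactly one `K`-coset) shows that for large `q`, `r`
(`a q, a r > 2|H|/5`) we have `6 a (q + r) + 2 (a q + a r) < 3 |H|`.
Hence `2q` is never large, so `0` is not large, and two distinct large cosets must be `x` and
`-x`; adding the inequality for `(x, x)`, `(-x, -x)` and `(x, -x)` bounds the sum of `a` over
the five cosets `0, ±x, ±2x` by `3|H|/2`, contradicting `|A| > 3|H|/2`.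
-/

open Finset AddAction
open scoped Pointwise

section Transform

variable {G : Type*} [AddCommGroup G] [DecidableEq G]

lemma stabilizer_le_stabilizer_add (s t : Finset G) : stabilizer G s ≤ stabilizer G (s + t) := by
  intro k hk
  rw [mem_stabilizer_finset'] at hk ⊢
  intro z hz
  obtain ⟨a, ha, b, hb, rfl⟩ := mem_add.mp hz
  rw [vadd_eq_add, ← add_assoc]
  exact add_mem_add (hk ha) hb

lemma card_le_card_stabilizer_of_sub_mem {s t : Finset G} (hs : s.Nonempty) (y₀ : G)
    (ht : ∀ y ∈ t, y - y₀ ∈ stabilizer G s) : #t ≤ Nat.card (stabilizer G s) := by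
  have hfin : (stabilizer G s : Set G).Finite := by
    simpa only [stabilizer_coe_finset] using stabilizer_finite (G := G) (by simpa) s.finite_toSet
  calc #t = #(t.image (· - y₀)) := (card_image_of_injective _ sub_left_injective).symm
    _ = (↑(t.image (· - y₀)) : Set G).ncard := (Set.ncard_coe_finset _).symm
    _ ≤ (stabilizer G s : Set G).ncard :=
      Set.ncard_le_ncard (by simpa [Set.subset_def] using ht) hfin
    _ = Nat.card (stabilizer G s) := Nat.card_coe_set_eq _

theorem exists_stabilized_subset_add {s t : Finset G} (hs : s.Nonempty) (ht : t.Nonempty) :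
    ∃ (K : AddSubgroup G) (D : Finset G), D ⊆ s + t ∧ D.Nonempty ∧ K ≤ stabilizer G D ∧
      #s + #t ≤ #D + Nat.card K := by
  induction t using Finset.strongInduction generalizing s with
  | H t ih =>
  by_cases hstab : ∀ x ∈ s, ∀ y ∈ t, ∀ y' ∈ t, y' - y + x ∈ s
  -- `t - t` stabilizes `s`, so `t` lies in one coset of `stabilizer G s`
  · obtain ⟨y₀, hy₀⟩ := ht
    refine ⟨stabilizer G s, s + t, subset_rfl, hs.add ⟨y₀, hy₀⟩,
      stabilizer_le_stabilizer_add s t, add_le_add (card_le_card_add_right ⟨y₀, hy₀⟩) ?_⟩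
    exact card_le_card_stabilizer_of_sub_mem hs y₀ fun y hy =>
      mem_stabilizer_finset'.mpr fun x hx => hstab x hx y₀ hy₀ y hy
  -- the e-transform with `e = x - y` keeps `#s + #t`, shrinks `s + t` and removes `y'` from `t`
  · push Not at hstab
    obtain ⟨x, hx, y, hy, y', hy', hout⟩ := hstab
    set p := addDysonETransform (x - y) (s, t)
    have hy_mem : y ∈ p.2 := mem_inter.mpr ⟨hy, mem_vadd_finset.mpr ⟨x, hx, by simp⟩⟩
    have hp : p.2 ⊂ t := by
      refine Finset.ssubset_iff_subset_ne.mpr ⟨inter_subset_left, fun h => hout ?_⟩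
      obtain ⟨z, hz, hz'⟩ := mem_vadd_finset.mp (mem_inter.mp (h.symm ▸ hy')).2
      rw [← hz', vadd_eq_add]
      rwa [show -(x - y) + z - y + x = z by abel]
    obtain ⟨K, D, hD, hDne, hK, hcard⟩ :=
      ih p.2 hp (s := p.1) (hs.mono subset_union_left) ⟨y, hy_mem⟩
    refine ⟨K, D, hD.trans (addDysonETransform.subset _ _), hDne, hK, ?_⟩
    have : #p.1 + #p.2 = #s + #t := addDysonETransform.card (x - y) (s, t)
    omega

end Transform

section Cosets

variable {G : Type*} [AddCommGroup G] {K : AddSubgroup G}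

noncomputable def cosetSlice (K : AddSubgroup G) (S : Finset G) (g : G) : Finset K :=
  S.preimage (fun k : K => g + k) ((add_right_injective g).comp Subtype.val_injective).injOn

@[simp]
lemma mem_cosetSlice {S : Finset G} {g : G} {k : K} : k ∈ cosetSlice K S g ↔ g + k ∈ S :=
  mem_preimage

lemma card_cosetSlice [DecidableEq (G ⧸ K)] (S : Finset G) (g : G) :
    #(cosetSlice K S g) = #(S.filter fun x : G => (x : G ⧸ K) = g) := by
  classical
  rw [cosetSlice, card_preimage]
  congr 1
  refine filter_congr fun x _ => ⟨?_, fun h => ⟨⟨x - g, ?_⟩, add_sub_cancel g x⟩⟩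
  · rintro ⟨k, rfl⟩
    exact QuotientAddGroup.eq_iff_sub_mem.mpr (by simp)
  · exact QuotientAddGroup.eq_iff_sub_mem.mp h

lemma disjoint_cosetSlice_add [DecidableEq G] {X Y W : Finset G} (h : Disjoint (X + Y) W)
    (g g' : G) : Disjoint (cosetSlice K X g + cosetSlice K Y g') (cosetSlice K W (g + g')) := by
  refine disjoint_left.mpr fun z hz hzW => disjoint_left.mp h ?_ (mem_cosetSlice.mp hzW)
  obtain ⟨a, ha, b, hb, rfl⟩ := mem_add.mp hz
  simpa [add_add_add_comm] using add_mem_add (mem_cosetSlice.mp ha) (mem_cosetSlice.mp hb)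

lemma mem_of_mk_eq_of_le_stabilizer [DecidableEq G] {D : Finset G} (hK : K ≤ stabilizer G D)
    {d g : G} (hd : d ∈ D) (h : (g : G ⧸ K) = d) : g ∈ D := by
  simpa using mem_stabilizer_finset'.mp (hK (QuotientAddGroup.eq_iff_sub_mem.mp h)) hd

lemma sum_card_filter_mk_add_card_filter_mk_sub [DecidableEq (G ⧸ K)] [Fintype (G ⧸ K)]
    (X Y : Finset G) (v : G ⧸ K) :
    ∑ c, (#(X.filter fun x : G => (x : G ⧸ K) = c) +
      #(Y.filter fun y : G => (y : G ⧸ K) = v - c)) = #X + #Y := by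
  rw [sum_add_distrib, ← card_eq_sum_card_fiberwise fun x _ => mem_univ _]
  exact congrArg _ (((Equiv.subLeft v).sum_comp fun c =>
    #(Y.filter fun y : G => (y : G ⧸ K) = c)).trans
      (card_eq_sum_card_fiberwise fun y _ => mem_univ _).symm)

variable [Fintype G]

section

variable [DecidableEq (G ⧸ K)]

lemma card_filter_mk_eq (c : G ⧸ K) :
    #(univ.filter fun x : G => (x : G ⧸ K) = c) = Nat.card K := by
  obtain ⟨g, rfl⟩ := QuotientAddGroup.mk_surjective c
  have := Fintype.ofFinite K
  rw [← card_cosetSlice, Nat.card_eq_fintype_card, ← card_univ]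
  congr 1
  ext k
  simp

lemma card_filter_mk_le (S : Finset G) (c : G ⧸ K) :
    #(S.filter fun x : G => (x : G ⧸ K) = c) ≤ Nat.card K :=
  card_filter_mk_eq c ▸ card_le_card (filter_subset_filter _ (subset_univ S))

lemma card_le_card_image_mk_mul (S : Finset G) :
    #S ≤ #(S.image ((↑) : G → G ⧸ K)) * Nat.card K :=
  mul_comm (Nat.card K) _ ▸ card_le_mul_card_image S _ fun c _ => card_filter_mk_le S c

lemma card_eq_card_image_mk_mul [DecidableEq G] {D : Finset G} (hK : K ≤ stabilizer G D) :
    #D = #(D.image ((↑) : G → G ⧸ K)) * Nat.card K := by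
  rw [card_eq_sum_card_fiberwise (f := ((↑) : G → G ⧸ K)) (t := D.image (↑))
    fun x hx => mem_image_of_mem _ hx, ← smul_eq_mul, ← sum_const]
  refine sum_congr rfl fun c hc => ?_
  rw [← card_filter_mk_eq c]
  congr 1
  ext g
  simp only [mem_filter, mem_univ, true_and, and_iff_right_iff_imp]
  obtain ⟨d, hd, rfl⟩ := mem_image.mp hc
  exact mem_of_mk_eq_of_le_stabilizer hK hd

end

lemma card_le_card_of_le_stabilizer [DecidableEq G] {D : Finset G} (hK : K ≤ stabilizer G D)
    (hD : D.Nonempty) : Nat.card K ≤ #D := by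
  classical
  rw [card_eq_card_image_mk_mul hK]
  exact Nat.le_mul_of_pos_left _ (hD.image _).card_pos

end Cosets

lemma AddSubgroup.exists_index_eq_pow {G : Type*} [AddGroup G] {p d : ℕ} (hp : p.Prime)
    (hG : Nat.card G = p ^ d) (K : AddSubgroup G) : ∃ i, K.index = p ^ i := by
  obtain ⟨i, -, hi⟩ := (Nat.dvd_prime_pow hp).mp (hG ▸ K.index_dvd_card)
  exact ⟨i, hi⟩

lemma Finset.card_add_card_le_of_disjoint {α : Type*} [Fintype α] {s t : Finset α}
    (h : Disjoint s t) : #s + #t ≤ Nat.card α := by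
  rw [← card_disjUnion s t h, Nat.card_eq_fintype_card]
  exact card_le_univ _

lemma Finset.sum_le_apply_add_mul {ι : Type*} [Fintype ι] (t : ι → ℕ) {k : ℕ}
    (ht : ∀ i, t i ≤ k) (i₀ : ι) : ∑ i, t i ≤ t i₀ + (Fintype.card ι - 1) * k := by
  classical
  rw [← add_sum_erase univ t (mem_univ i₀), ← card_univ,
    ← card_erase_of_mem (mem_univ i₀), ← smul_eq_mul]
  exact Nat.add_le_add_left (sum_le_card_nsmul _ t k fun i _ => ht i) _

section FiveGroup

variable {G : Type*} [AddCommGroup G] [Fintype G]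

lemma exists_mem_mem_mk_add_mk_eq {K : AddSubgroup G} (hK : K.index = 5) {X Y : Finset G}
    (hX : 2 * Nat.card K < #X) (hY : 2 * Nat.card K < #Y) (v : G ⧸ K) :
    ∃ x ∈ X, ∃ y ∈ Y, (x : G ⧸ K) + y = v := by
  classical
  have := Fintype.ofFinite (G ⧸ K)
  have three_le (S : Finset G) (hS : 2 * Nat.card K < #S) :
      3 ≤ #(S.image ((↑) : G → G ⧸ K)) := by
    have := card_le_card_image_mk_mul (K := K) S
    by_contra! h
    have : #(S.image ((↑) : G → G ⧸ K)) * Nat.card K ≤ 2 * Nat.card K :=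
      Nat.mul_le_mul_right _ (by omega)
    omega
  have hYv : 3 ≤ #((Y.image ((↑) : G → G ⧸ K)).image (v - ·)) := by
    rw [card_image_of_injective _ sub_right_injective]
    exact three_le Y hY
  have hQ : #(univ : Finset (G ⧸ K)) = 5 := by
    rw [card_univ, ← Nat.card_eq_fintype_card, ← AddSubgroup.index_eq_card, hK]
  obtain ⟨c, hc⟩ := inter_nonempty_of_card_lt_card_add_card
    (subset_univ (X.image ((↑) : G → G ⧸ K)))
    (subset_univ ((Y.image ((↑) : G → G ⧸ K)).image (v - ·))) (by linarith [three_le X hX])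
  obtain ⟨hcX, hcY⟩ := mem_inter.mp hc
  obtain ⟨x, hx, rfl⟩ := mem_image.mp hcX
  obtain ⟨_, hc', hxy⟩ := mem_image.mp hcY
  obtain ⟨y, hy, rfl⟩ := mem_image.mp hc'
  exact ⟨x, hx, y, hy, by rw [← hxy]; abel⟩

variable [DecidableEq G] {d : ℕ}

theorem five_mul_card_le_or_card_add_card_add_card_le (hG : Nat.card G = 5 ^ d)
    {X Y W : Finset G} (hX : X.Nonempty) (hY : Y.Nonempty) (h : Disjoint (X + Y) W) :
    5 * #W ≤ 4 * Nat.card G ∨ 25 * (#W + #X + #Y) ≤ 26 * Nat.card G := by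
  obtain ⟨K, D, hDXY, hD, hK, hcard⟩ := exists_stabilized_subset_add hX hY
  have hWD := card_add_card_le_of_disjoint (h.mono_left hDXY).symm
  have hKD := card_le_card_of_le_stabilizer hK hD
  obtain ⟨i, hi⟩ := K.exists_index_eq_pow Nat.prime_five hG
  have hKG := K.card_mul_index
  rw [hi] at hKG
  rcases i with _ | _ | i
  · left
    simp only [pow_zero, mul_one] at hKG
    omega
  · left
    simp only [zero_add, pow_one] at hKG
    omega
  · right
    have : 25 * Nat.card K ≤ Nat.card G := by
      rw [← hKG, mul_comm]
      exact Nat.mul_le_mul_left _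
        (Nat.pow_le_pow_right (by norm_num : 5 > 0) (by omega : 2 ≤ i + 1 + 1))
    omega

lemma exists_forall_mk_eq_of_disjoint {K : AddSubgroup G} {D W : Finset G}
    (hK : K ≤ stabilizer G D) [DecidableEq (G ⧸ K)]
    (hD : K.index = #(D.image ((↑) : G → G ⧸ K)) + 1) (h : Disjoint D W) :
    ∃ v : G ⧸ K, ∀ w ∈ W, (w : G ⧸ K) = v := by
  have := Fintype.ofFinite (G ⧸ K)
  obtain ⟨v, hv⟩ : ∃ v, univ \ D.image ((↑) : G → G ⧸ K) = {v} := by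
    rw [← card_eq_one, card_sdiff_of_subset (subset_univ _), card_univ,
      ← Nat.card_eq_fintype_card, ← AddSubgroup.index_eq_card, hD, Nat.add_sub_cancel_left]
  refine ⟨v, fun w hw =>
    mem_singleton.mp (hv ▸ mem_sdiff.mpr ⟨mem_univ _, fun hwD => ?_⟩)⟩
  obtain ⟨x, hx, hxw⟩ := mem_image.mp hwD
  exact disjoint_left.mp h (mem_of_mk_eq_of_le_stabilizer hK hx hxw.symm) hw

theorem five_mul_card_le_or_card_add_card_add_card_le_coset
    (hG : Nat.card G = 5 ^ d) {K : AddSubgroup G} [DecidableEq (G ⧸ K)] {X Y W : Finset G}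
    (h : Disjoint (X + Y) W) {x y : G} (hx : x ∈ X) (hy : y ∈ Y) :
    5 * #(W.filter fun w : G => (w : G ⧸ K) = ↑(x + y)) ≤ 4 * Nat.card K ∨
      25 * (#(W.filter fun w : G => (w : G ⧸ K) = ↑(x + y)) +
        #(X.filter fun x' : G => (x' : G ⧸ K) = x) +
        #(Y.filter fun y' : G => (y' : G ⧸ K) = y)) ≤ 26 * Nat.card K := by
  have := Fintype.ofFinite K
  obtain ⟨e, -, he⟩ :=
    (Nat.dvd_prime_pow Nat.prime_five).mp (hG ▸ K.card_addSubgroup_dvd_card)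
  simpa only [card_cosetSlice] using five_mul_card_le_or_card_add_card_add_card_le he
    (X := cosetSlice K X x) (Y := cosetSlice K Y y) ⟨0, by simpa⟩ ⟨0, by simpa⟩
    (disjoint_cosetSlice_add h x y)

theorem five_mul_card_le_or_card_add_card_add_card_le_of_index_eq_five
    (hG : Nat.card G = 5 ^ d) {K : AddSubgroup G} (hK : K.index = 5) {X Y W : Finset G}
    (h : Disjoint (X + Y) W) (v : G ⧸ K) (hW : ∀ w ∈ W, (w : G ⧸ K) = v)
    (hX : 2 * Nat.card K < #X) (hY : 2 * Nat.card K < #Y) :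
    5 * #W ≤ 4 * Nat.card K ∨ 25 * (#W + #X + #Y) ≤ 126 * Nat.card K := by
  classical
  have := Fintype.ofFinite (G ⧸ K)
  set k := Nat.card K
  -- the `K`-coset `c` of `X` and the `K`-coset `v - c` of `Y` add up into the coset `v` of `W`
  let t : G ⧸ K → ℕ := fun c =>
    #(X.filter fun x : G => (x : G ⧸ K) = c) + #(Y.filter fun y : G => (y : G ⧸ K) = v - c)
  have hpair : ∀ x ∈ X, ∀ y ∈ Y, (x : G ⧸ K) + y = v →
      5 * #W ≤ 4 * k ∨ 25 * (#W + t x) ≤ 26 * k := by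
    intro x hx y hy hxy
    have hWv : W.filter (fun w : G => (w : G ⧸ K) = ↑(x + y)) = W :=
      filter_true_of_mem fun w hw => by rw [hW w hw, ← hxy]; rfl
    have := five_mul_card_le_or_card_add_card_add_card_le_coset (K := K) hG h hx hy
    rwa [hWv, eq_sub_of_add_eq' hxy, add_assoc] at this
  by_cases hW5 : 5 * #W ≤ 4 * k
  · exact .inl hW5
  right
  have ht : ∀ c, t c ≤ k := by
    intro c
    by_cases hXc : ∃ x ∈ X, (x : G ⧸ K) = c
    · by_cases hYc : ∃ y ∈ Y, (y : G ⧸ K) = v - c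
      · obtain ⟨x, hx, rfl⟩ := hXc
        obtain ⟨y, hy, hyc⟩ := hYc
        have := (hpair x hx y hy (by rw [hyc]; abel)).resolve_left hW5
        omega
      · push Not at hYc
        have := card_filter_mk_le X c
        simp only [t, filter_false_of_mem hYc, card_empty]
        omega
    · push Not at hXc
      simp only [t, filter_false_of_mem hXc, card_empty, zero_add]
      exact card_filter_mk_le Y _
  obtain ⟨x, hx, y, hy, hxy⟩ := exists_mem_mem_mk_add_mk_eq hK hX hY v
  have hx0 := (hpair x hx y hy hxy).resolve_left hW5
  have hQ : Fintype.card (G ⧸ K) = 5 := by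
    rw [← Nat.card_eq_fintype_card, ← AddSubgroup.index_eq_card, hK]
  have := sum_le_apply_add_mul t ht (x : G ⧸ K)
  rw [sum_card_filter_mk_add_card_filter_mk_sub X Y v, hQ] at this
  omega

theorem six_mul_card_add_two_mul_card_lt (hG : Nat.card G = 5 ^ d)
    {X Y W : Finset G} (h : Disjoint (X + Y) W) (hX : 2 * Nat.card G < 5 * #X)
    (hY : 2 * Nat.card G < 5 * #Y) (hXY : #X + #Y ≤ Nat.card G) :
    6 * #W + 2 * (#X + #Y) < 3 * Nat.card G := by
  classical
  obtain ⟨K, D, hDXY, hD, hK, hcard⟩ :=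
    exists_stabilized_subset_add (card_pos.mp (by omega : 0 < #X))
      (card_pos.mp (by omega : 0 < #Y))
  have hWD := card_add_card_le_of_disjoint (h.mono_left hDXY).symm
  have hKD := card_le_card_of_le_stabilizer hK hD
  have hDj := card_eq_card_image_mk_mul hK
  generalize hj : #(D.image ((↑) : G → G ⧸ K)) = j at hDj
  obtain ⟨i, hi⟩ := K.exists_index_eq_pow Nat.prime_five hG
  have hKG := K.card_mul_index
  rw [hi] at hKG
  rcases i with _ | _ | _ | i
  · simp only [pow_zero, mul_one] at hKG
    omega
  · simp only [zero_add, pow_one] at hKG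
    have hj3 : 3 < j := Nat.lt_of_mul_lt_mul_right (by omega : 3 * Nat.card K < j * Nat.card K)
    have hj5 : j ≤ 5 :=
      Nat.le_of_mul_le_mul_right (by omega : j * Nat.card K ≤ 5 * Nat.card K) (by omega)
    obtain rfl | rfl : j = 4 ∨ j = 5 := by omega
    -- `D` fills four of the five `K`-cosets, so `W` lies in the fifth
    · obtain ⟨v, hv⟩ :=
        exists_forall_mk_eq_of_disjoint hK (by simp [hi, hj]) (h.mono_left hDXY)
      have := five_mul_card_le_or_card_add_card_add_card_le_of_index_eq_five hG (by rw [hi]; rfl)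
        h v hv (by omega) (by omega)
      omega
    · omega
  · simp only [zero_add] at hKG
    have hj : 19 < j := Nat.lt_of_mul_lt_mul_right (by omega : 19 * Nat.card K < j * Nat.card K)
    have : 20 * Nat.card K ≤ j * Nat.card K := Nat.mul_le_mul_right _ hj
    omega
  · have : 125 * Nat.card K ≤ Nat.card G := by
      rw [← hKG, mul_comm]
      exact Nat.mul_le_mul_left _
        (Nat.pow_le_pow_right (by norm_num : 5 > 0) (by omega : 3 ≤ i + 1 + 1 + 1))
    omega

end FiveGroup

lemma AddSubgroup.card_quotient_of_isCoatom {G : Type*} [AddCommGroup G] {p : ℕ}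
    [Fact p.Prime] (hG : ∀ g : G, p • g = 0) {H : AddSubgroup G} (hH : IsCoatom H) :
    Nat.card (G ⧸ H) = p := by
  obtain ⟨g, hg⟩ := SetLike.exists_not_mem_of_ne_top H hH.ne_top
  have hsup : H ⊔ zmultiples g = ⊤ := (hH.ne_iff_eq_top le_sup_left).mp fun h =>
    hg (h ▸ mem_sup_right (mem_zmultiples g))
  have hgen : zmultiples (QuotientAddGroup.mk' H g) = ⊤ := by
    rw [← (QuotientAddGroup.mk' H).map_zmultiples, ← map_top_of_surjective _
      (QuotientAddGroup.mk'_surjective H), ← hsup, map_sup, QuotientAddGroup.map_mk'_self,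
      bot_sup_eq]
  rw [← card_top, ← hgen, Nat.card_zmultiples]
  refine addOrderOf_eq_prime ?_ fun h => hg ((QuotientAddGroup.eq_zero_iff g).mp h)
  rw [← map_nsmul, hG, map_zero]

lemma sum_zmod_five_eq_of_ne_zero (f : ZMod 5 → ℕ) {x : ZMod 5} (hx : x ≠ 0) :
    ∑ i, f i = f 0 + f x + f (-x) + f (x + x) + f (-(x + x)) := by
  have huniv : (univ : Finset (ZMod 5)).val = {0, x, -x, x + x, -(x + x)} := by
    revert x; decide
  rw [sum_eq_multiset_sum, huniv]
  simp [add_assoc]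

lemma eq_of_two_mul_lt_five_mul {f : ZMod 5 → ℕ} {m : ℕ} (hsum : 3 * m < 2 * ∑ i, f i)
    (hf : ∀ i j, 2 * m < 5 * f i → 2 * m < 5 * f j → 6 * f (i + j) + 2 * (f i + f j) < 3 * m)
    {x y : ZMod 5} (hx : 2 * m < 5 * f x) (hy : 2 * m < 5 * f y) : x = y := by
  have hdouble : ∀ i, 2 * m < 5 * f i → 5 * f (i + i) ≤ 2 * m := fun i hi => by
    have := hf i i hi hi
    omega
  have hne : ∀ i, 2 * m < 5 * f i → i ≠ 0 := by
    rintro i hi rfl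
    have := hdouble 0 hi
    rw [add_zero] at this
    omega
  by_contra hxy
  have hcases : ∀ x y : ZMod 5, x ≠ 0 → y ≠ 0 → x ≠ y →
      y = x + x ∨ x = y + y ∨ y = -x := by
    decide
  obtain rfl | rfl | rfl := hcases x y (hne x hx) (hne y hy) hxy
  · exact absurd (hdouble x hx) (not_le.mpr hy)
  · exact absurd (hdouble y hy) (not_le.mpr hx)
  · have h0 := hf x (-x) hx hy
    have h1 := hf x x hx hx
    have h2 := hf (-x) (-x) hy hy
    rw [add_neg_cancel, ← neg_add] at *
    have := sum_zmod_five_eq_of_ne_zero f (hne x hx)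
    omega

lemma AddSubgroup.card_eq_pow_pred {G : Type*} [AddGroup G] {H : AddSubgroup G} {p n : ℕ}
    (hp : 0 < p) (hG : Nat.card G = p ^ n) (hH : Nat.card (G ⧸ H) = p) :
    Nat.card H = p ^ (n - 1) := by
  have := H.card_eq_card_quotient_mul_card_addSubgroup
  rw [hG, hH] at this
  rcases n with _ | n
  · exact Nat.eq_one_of_mul_eq_one_left this.symm
  · rw [Nat.add_sub_cancel, ← Nat.mul_left_cancel_iff hp, ← pow_succ', this]

lemma SumFree.disjoint_toFinset_add {G : Type*} [AddGroup G] [Fintype G] [DecidableEq G]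
    {A : Set G} [DecidablePred (· ∈ A)] (hA : SumFree A) :
    Disjoint (A.toFinset + A.toFinset) A.toFinset := by
  refine disjoint_left.mpr fun z hz hzA => ?_
  obtain ⟨x, hx, y, hy, rfl⟩ := mem_add.mp hz
  exact hA x (by simpa using hx) y (by simpa using hy) (by simpa using hzA)

theorem eq_of_two_mul_card_lt_five_mul_card_filter {G : Type*} [AddCommGroup G] [Fintype G]
    [DecidableEq G] {H : AddSubgroup G} [DecidableEq (G ⧸ H)] {d : ℕ}
    (hH : Nat.card H = 5 ^ d) (hQ : Nat.card (G ⧸ H) = 5) {A : Finset G}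
    (hA : Disjoint (A + A) A) (hcard : 3 * Nat.card H < 2 * #A)
    (hhalf : ∀ q : G ⧸ H, 2 * #(A.filter fun x : G => (x : G ⧸ H) = q) < Nat.card H)
    {q r : G ⧸ H} (hq : 2 * Nat.card H < 5 * #(A.filter fun x : G => (x : G ⧸ H) = q))
    (hr : 2 * Nat.card H < 5 * #(A.filter fun x : G => (x : G ⧸ H) = r)) : q = r := by
  set a : G ⧸ H → ℕ := fun q => #(A.filter fun x : G => (x : G ⧸ H) = q)
  have hkey : ∀ q r, 2 * Nat.card H < 5 * a q → 2 * Nat.card H < 5 * a r →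
      6 * a (q + r) + 2 * (a q + a r) < 3 * Nat.card H := by
    intro q r hq hr
    obtain ⟨g, rfl⟩ := QuotientAddGroup.mk_surjective q
    obtain ⟨g', rfl⟩ := QuotientAddGroup.mk_surjective r
    have := Fintype.ofFinite H
    have := six_mul_card_add_two_mul_card_lt hH (disjoint_cosetSlice_add hA g g')
    simp only [card_cosetSlice, QuotientAddGroup.mk_add] at this
    exact this hq hr (by linarith [hhalf g, hhalf g'])
  have := Fintype.ofFinite (G ⧸ H)
  have := Fact.mk Nat.prime_five
  obtain ⟨gen, hgen⟩ := (isAddCyclic_of_prime_card hQ).exists_generator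
  set e := zmodAddEquivOfGenerator hgen hQ
  have hsum : ∑ i, (a ∘ e) i = #A := (e.toEquiv.sum_comp a).trans
    (card_eq_sum_card_fiberwise fun _ _ => mem_univ _).symm
  refine e.symm.injective (eq_of_two_mul_lt_five_mul (f := a ∘ e) (m := Nat.card H) (by omega)
    (fun i j => by simpa only [Function.comp_apply, map_add] using hkey (e i) (e j))
    (by simpa using hq) (by simpa using hr))

theorem stmt_5_general (n : ℕ) (A : Set (Fin n → ZMod 5))
    (hA : SumFree A) (hcard : 2 * A.ncard > 3 * 5 ^ (n - 1))
    (H : AddSubgroup (Fin n → ZMod 5)) (hH : IsCoatom H)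
    (hhalf : ∀ x : (Fin n → ZMod 5) ⧸ H,
      2 * (A ∩ (QuotientAddGroup.mk ⁻¹' {x})).ncard < Nat.card H) :
    {x : (Fin n → ZMod 5) ⧸ H |
      5 * (A ∩ (QuotientAddGroup.mk ⁻¹' {x})).ncard > 2 * Nat.card H}.ncard ≤ 1 := by
  classical
  have := Fact.mk Nat.prime_five
  have hQ := H.card_quotient_of_isCoatom (ZModModule.char_nsmul_eq_zero 5) hH
  have hm : Nat.card H = 5 ^ (n - 1) := H.card_eq_pow_pred (by norm_num) (by simp) hQ
  have ha : ∀ q, (A ∩ QuotientAddGroup.mk ⁻¹' {q}).ncard =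
      #(A.toFinset.filter fun x : Fin n → ZMod 5 => (x : (Fin n → ZMod 5) ⧸ H) = q) := by
    intro q
    rw [← Set.ncard_coe_finset]
    congr 1
    ext
    simp
  simp only [ha] at hhalf ⊢
  refine (Set.ncard_le_one (Set.toFinite _)).mpr fun q hq r hr =>
    eq_of_two_mul_card_lt_five_mul_card_filter hm hQ hA.disjoint_toFinset_add ?_ hhalf hq hr
  rw [← Set.ncard_eq_toFinset_card', hm]
  exact hcard

theorem stmt_5 (n : ℕ) (hn : 1 ≤ n) (A : Set (Fin n → ZMod 5))
    (hA : SumFree A) (hcard : 2 * A.ncard > 3 * 5 ^ (n - 1))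
    (H : AddSubgroup (Fin n → ZMod 5)) (hH : IsCoatom H)
    (hhalf : ∀ x : (Fin n → ZMod 5) ⧸ H,
      2 * (A ∩ (QuotientAddGroup.mk ⁻¹' {x})).ncard < Nat.card H) :
    {x : (Fin n → ZMod 5) ⧸ H |
      5 * (A ∩ (QuotientAddGroup.mk ⁻¹' {x})).ncard > 2 * Nat.card H}.ncard ≤ 1 :=
  stmt_5_general n A hA hcard H hH hhalf
end

section
/- Let A be a finite sum-free subset of a finite abelian group G with |A| = α|G|. Then there exists a non-principal character χ of G such that Re(𝟙̂_A(χ)) ≤ -α²/(1-α), where 𝟙̂_A(χ) := |G|⁻¹ Σ_{a∈A} χ(a). -/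
open Finset ComplexConjugate

lemma Finset.exists_le_sum_mul_div_sum {ι : Type*} {s : Finset ι} {w f : ι → ℝ}
    (hw : ∀ i ∈ s, 0 ≤ w i) (hpos : 0 < ∑ i ∈ s, w i) :
    ∃ i ∈ s, f i ≤ (∑ i ∈ s, w i * f i) / ∑ i ∈ s, w i := by
  obtain ⟨i, hi, hinf⟩ := exists_mem_eq_inf' (nonempty_of_sum_ne_zero hpos.ne') f
  refine ⟨i, hi, ?_⟩
  have := inf_le_centerMass (f := f) hw hpos
  rw [centerMass, smul_eq_mul, inv_mul_eq_div] at this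
  simpa [hinf] using this

namespace AddChar

variable {G : Type*} [AddCommGroup G] [Fintype G] [DecidableEq G]

lemma sum_sum_apply_mul_conj_sum {ι : Type*} (s : Finset ι) (f : ι → G) (C : Finset G) :
    ∑ ψ : AddChar G ℂ, (∑ i ∈ s, ψ (f i)) * conj (∑ c ∈ C, ψ c) =
      Fintype.card G * #{i ∈ s | f i ∈ C} := by
  have expand (ψ : AddChar G ℂ) :
      (∑ i ∈ s, ψ (f i)) * conj (∑ c ∈ C, ψ c) = ∑ i ∈ s, ∑ c ∈ C, ψ (f i - c) := by
    simp only [map_sum, sum_mul_sum, sub_eq_add_neg, map_add_eq_mul, map_neg_eq_conj]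
  calc _ = ∑ ψ : AddChar G ℂ, ∑ i ∈ s, ∑ c ∈ C, ψ (f i - c) := sum_congr rfl fun ψ _ => expand ψ
    _ = ∑ i ∈ s, ∑ c ∈ C, ∑ ψ : AddChar G ℂ, ψ (f i - c) := by
        simp only [sum_comm (γ := AddChar G ℂ)]
    _ = ∑ i ∈ s, (Fintype.card G : ℂ) * if f i ∈ C then 1 else 0 := by
        simp only [sum_apply_eq_ite, sub_eq_zero, sum_ite_eq, mul_boole]
    _ = _ := by rw [← mul_sum, natCast_card_filter]

lemma sum_normSq_sum (A : Finset G) :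
    ∑ ψ : AddChar G ℂ, Complex.normSq (∑ a ∈ A, ψ a) = Fintype.card G * #A := by
  have h := congrArg Complex.re (sum_sum_apply_mul_conj_sum (G := G) A id A)
  simp only [id, filter_mem_eq_inter, inter_self, Complex.mul_conj, Complex.re_sum,
    Complex.ofReal_re] at h
  exact_mod_cast h

lemma sum_normSq_mul_re_sum_eq_zero {A : Finset G} (hA : SumFree (A : Set G)) :
    ∑ ψ : AddChar G ℂ, Complex.normSq (∑ a ∈ A, ψ a) * (∑ a ∈ A, ψ a).re = 0 := by
  have hsq (ψ : AddChar G ℂ) :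
      (∑ a ∈ A, ψ a) * ∑ a ∈ A, ψ a = ∑ x ∈ A ×ˢ A, ψ (x.1 + x.2) := by
    simp only [sum_mul_sum, sum_product, map_add_eq_mul]
  have hempty : {x ∈ A ×ˢ A | x.1 + x.2 ∈ A} = ∅ :=
    filter_false_of_mem fun x hx => hA _ (mem_product.1 hx).1 _ (mem_product.1 hx).2
  have h := congrArg Complex.re
    (sum_sum_apply_mul_conj_sum (G := G) (A ×ˢ A) (fun x => x.1 + x.2) A)
  simp only [← hsq, hempty, card_empty, Nat.cast_zero, mul_zero, Complex.zero_re, mul_assoc,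
    Complex.mul_conj] at h
  rw [Complex.re_sum] at h
  simpa only [Complex.re_mul_ofReal, mul_comm] using h

end AddChar

open AddChar in
theorem SumFree.exists_addChar_ne_one_re_sum_le {G : Type*} [AddCommGroup G] [Fintype G]
    {A : Finset G} (hA : SumFree (A : Set G)) (hne : A.Nonempty) :
    ∃ ψ : AddChar G ℂ, ψ ≠ 1 ∧
      (∑ a ∈ A, ψ a).re ≤ -(#A : ℝ) ^ 2 / (Fintype.card G - #A) := by
  classical
  set n : ℝ := (Fintype.card G : ℝ)
  set a : ℝ := (#A : ℝ)
  have ha_pos : 0 < a := by simpa [a] using hne.card_pos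
  have ha_lt : a < n := by
    have h0 : (0 : G) ∉ A := fun h => hA 0 h 0 h (by simpa using h)
    exact Nat.cast_lt.mpr (card_lt_univ_of_notMem h0)
  have hF1 : ∑ x ∈ A, (1 : AddChar G ℂ) x = a := by simp [a]
  have hw : ∑ ψ ∈ univ.erase (1 : AddChar G ℂ), Complex.normSq (∑ x ∈ A, ψ x) = n * a - a ^ 2 := by
    rw [sum_erase_eq_sub (mem_univ _), sum_normSq_sum, hF1, Complex.normSq_ofReal, sq]
  have hwf : ∑ ψ ∈ univ.erase (1 : AddChar G ℂ),
      Complex.normSq (∑ x ∈ A, ψ x) * (∑ x ∈ A, ψ x).re = -a ^ 3 := by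
    rw [sum_erase_eq_sub (mem_univ _), sum_normSq_mul_re_sum_eq_zero hA, hF1, Complex.normSq_ofReal,
      Complex.ofReal_re]
    ring
  obtain ⟨ψ, hψ, hle⟩ := exists_le_sum_mul_div_sum (f := fun ψ : AddChar G ℂ => (∑ x ∈ A, ψ x).re)
    (fun ψ _ => Complex.normSq_nonneg _) (by rw [hw]; nlinarith)
  refine ⟨ψ, ne_of_mem_erase hψ, hle.trans_eq ?_⟩
  rw [hw, hwf]
  field_simp

theorem stmt_12_general {G : Type*} [AddCommGroup G] [Fintype G]
    (A : Finset G) (hA : SumFree (A : Set G)) (α : ℝ)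
    (hα : α = (A.card : ℝ) / Fintype.card G) (h0 : 0 < α) :
    ∃ χ : AddChar G ℂ, χ ≠ 1 ∧
      ((∑ a ∈ A, χ a) / (Fintype.card G : ℂ)).re ≤ -α ^ 2 / (1 - α) := by
  have hne : A.Nonempty := by
    rw [nonempty_iff_ne_empty]
    rintro rfl
    simp [hα] at h0
  obtain ⟨χ, hχ, hle⟩ := hA.exists_addChar_ne_one_re_sum_le hne
  refine ⟨χ, hχ, ?_⟩
  have hn : (0 : ℝ) < Fintype.card G := by exact_mod_cast Fintype.card_pos
  rw [Complex.div_natCast_re]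
  calc _ ≤ -(#A : ℝ) ^ 2 / (Fintype.card G - #A) / Fintype.card G := by gcongr
    _ = -α ^ 2 / (1 - α) := by
      rw [hα, one_sub_div hn.ne']
      field_simp

theorem stmt_12 {G : Type*} [AddCommGroup G] [Fintype G]
    (A : Finset G) (hA : SumFree (A : Set G)) (α : ℝ)
    (hα : α = (A.card : ℝ) / Fintype.card G) (h0 : 0 < α) (h1 : α < 1) :
    ∃ χ : AddChar G ℂ, χ ≠ 1 ∧
      ((∑ a ∈ A, χ a) / (Fintype.card G : ℂ)).re ≤ -α ^ 2 / (1 - α) :=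
  stmt_12_general A hA α hα h0
end

section
/- Let n ≥ 1 and suppose A ⊆ (ℤ/5ℤ)^n is sum-free. Then |A| ≤ 2·5^(n-1). -/
open Finset Pointwise

/-- Freiman's `3/2` theorem, which Mathlib states only for multiplicative groups, transported
through `Multiplicative G`. -/
theorem Finset.exists_addSubgroup_of_card_add_lt_three_halves {G : Type*} [AddGroup G]
    [DecidableEq G] {B : Finset G} (h : (#(B + B) : ℚ) < 3 / 2 * #B) :
    ∃ H : AddSubgroup G, (H : Set G) = ↑(-B + B) ∧ Nat.card H = #(B + B) := by
  let A : Finset (Multiplicative G) := B.map Multiplicative.ofAdd.toEmbedding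
  have hAA : A * A = (B + B).map Multiplicative.ofAdd.toEmbedding := by
    ext x
    simp only [A, mem_mul, mem_map_equiv, Multiplicative.ofAdd_symm_eq, Multiplicative.exists,
      toAdd_ofAdd, mem_add]
    constructor <;> rintro ⟨a, ha, b, hb, rfl⟩ <;> exact ⟨a, ha, b, hb, rfl⟩
  have hA : A⁻¹ * A = (-B + B).map Multiplicative.ofAdd.toEmbedding := by
    ext x
    simp only [A, mem_mul, mem_inv', mem_map_equiv, Multiplicative.ofAdd_symm_eq, toAdd_inv,
      Multiplicative.exists, toAdd_ofAdd, mem_add, mem_neg']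
    constructor <;> rintro ⟨a, ha, b, hb, rfl⟩ <;> exact ⟨a, ha, b, hb, rfl⟩
  have h' : (#(A * A) : ℚ) < 3 / 2 * #A := by simpa [hAA, A] using h
  have hcoe : (invMulSubgroup A h' : Set (Multiplicative G)) = ↑(A⁻¹ * A) := by
    rw [invMulSubgroup_eq_inv_mul, coe_mul, coe_inv]
  refine ⟨Subgroup.toAddSubgroup' (invMulSubgroup A h'), ?_, ?_⟩
  · change Multiplicative.ofAdd ⁻¹' (invMulSubgroup A h' : Set (Multiplicative G)) = _
    ext x
    rw [Set.mem_preimage, hcoe, mem_coe, hA, mem_map_equiv]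
    rfl
  · change Nat.card (invMulSubgroup A h') = _
    rw [← SetLike.coe_sort_coe, hcoe, Nat.card_coe_set_eq, Set.ncard_coe_finset,
      card_inv_mul_of_doubling_lt_three_halves h', hAA, card_map]

theorem SumFree.disjoint_add {G : Type*} [Add G] [DecidableEq G] {B : Finset G}
    (hB : SumFree (B : Set G)) : Disjoint B (B + B) := by
  rw [disjoint_left]
  intro c hc hc'
  obtain ⟨a, ha, b, hb, rfl⟩ := mem_add.1 hc'
  exact hB a ha b hb hc

theorem SumFree.exists_addSubgroup_ne_top_card_le {G : Type*} [AddGroup G] [Fintype G]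
    [DecidableEq G] {B : Finset G} (hB : SumFree (B : Set G))
    (hcard : 2 * Fintype.card G < 5 * #B) :
    ∃ H : AddSubgroup G, H ≠ ⊤ ∧ #B ≤ Nat.card H := by
  have hsum : #B + #(B + B) ≤ Fintype.card G := by
    rw [← card_union_of_disjoint hB.disjoint_add]
    exact card_le_univ _
  have hB₀ : B.Nonempty := card_pos.1 (by omega)
  obtain ⟨H, hH, hHcard⟩ := exists_addSubgroup_of_card_add_lt_three_halves (B := B) (by
    rw [div_mul_eq_mul_div, lt_div_iff₀ two_pos]
    exact_mod_cast (by omega : #(B + B) * 2 < 3 * #B))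
  refine ⟨H, ?_, ?_⟩
  · rintro rfl
    rw [AddSubgroup.card_top, Nat.card_eq_fintype_card] at hHcard
    omega
  · rw [← SetLike.coe_sort_coe, hH, Nat.card_coe_set_eq, Set.ncard_coe_finset]
    exact card_le_card_add_left hB₀.neg

theorem AddSubgroup.mul_card_le_of_ne_top {G : Type*} [AddGroup G] {p n : ℕ} (hp : p.Prime)
    (hG : Nat.card G = p ^ n) {H : AddSubgroup G} (hH : H ≠ ⊤) :
    p * Nat.card H ≤ Nat.card G := by
  obtain ⟨k, -, hk⟩ := (Nat.dvd_prime_pow hp).1 (hG ▸ H.index_dvd_card)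
  have hk₀ : k ≠ 0 := by
    rintro rfl
    exact hH (AddSubgroup.index_eq_one.1 (by simpa using hk))
  rw [← H.card_mul_index, mul_comm, hk]
  gcongr
  exact Nat.le_self_pow hk₀ p

theorem stmt_16_general (n : ℕ) (A : Set (Fin n → ZMod 5))
    (hA : SumFree A) : A.ncard ≤ 2 * 5 ^ (n - 1) := by
  have hcardG : Nat.card (Fin n → ZMod 5) = 5 ^ n := by simp
  have hpow : 5 ^ n ≤ 5 * 5 ^ (n - 1) := by
    rw [← pow_succ']
    exact Nat.pow_le_pow_right (by norm_num) (by omega)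
  lift A to Finset (Fin n → ZMod 5) using A.toFinite
  rw [Set.ncard_coe_finset]
  by_contra! hlt
  obtain ⟨H, hH, hBH⟩ := hA.exists_addSubgroup_ne_top_card_le (by
    rw [← Nat.card_eq_fintype_card, hcardG]; omega)
  have := H.mul_card_le_of_ne_top (by norm_num) hcardG hH
  omega

theorem stmt_16 (n : ℕ) (hn : 1 ≤ n) (A : Set (Fin n → ZMod 5))
    (hA : SumFree A) : A.ncard ≤ 2 * 5 ^ (n - 1) :=
  stmt_16_general n A hA
end
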